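/- Let p be a C², 2π-periodic support function with p+p''>0 and p(φ)+p(φ+π) constant. Equality in L² − 4πF = (4/9)π|F_e| holds if and only if all Fourier coefficients aₙ, bₙ of p vanish for n ≥ 4 (hence, since constant width kills n = 2, p(φ) = a₀ + a₁cos φ + b₁ sin φ + a₃ cos 3φ + b₃ sin 3φ). -/

import Mathlib

open Real intervalIntegral

/-!
Write `c n` for the complex Fourier coefficients of `p` on `[0, 2π]`. Parseval's identity applied
to `p`, `p'` and `p''` (with coefficients `c n`, `i n c n` and `-n² c n`) expands the deficit as
`L² - 4πF - (4/9)π|F_e| = -(4π²/9) ∑_{n ≠ 0} (n² - 1)(n² - 9) |c n|²`.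
The weight vanishes for `|n| ∈ {1, 3}`, is negative only for `|n| = 2`, and is positive for
`|n| ≥ 4`. Constant width kills the even harmonics, in particular `c (±2)`, so every term of the
series is nonnegative and the deficit vanishes exactly when `c n = 0` for all `|n| ≥ 4`.
-/

open Function
open MeasureTheory (MemLp volume)

theorem Function.Periodic.deriv {𝕜 F : Type*} [NontriviallyNormedField 𝕜] [NormedAddCommGroup F]
    [NormedSpace 𝕜 F] {f : 𝕜 → F} {c : 𝕜} (h : Periodic f c) : Periodic (deriv f) c := fun x => by
  rw [← deriv_comp_add_const, h.funext]

theorem eq_zero_iff_of_hasSum_apply_sub {ι : Type*} [DecidableEq ι] {g : ι → ℝ} {i : ι} {d : ℝ}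
    (h : HasSum g (g i - d)) (hg : ∀ j ≠ i, 0 ≤ g j) : d = 0 ↔ ∀ j ≠ i, g j = 0 := by
  have hupd : HasSum (update g i 0) (-d) := by
    rw [show -d = 0 - g i + (g i - d) by ring]
    exact h.update i 0
  have hnonneg : ∀ j, 0 ≤ update g i 0 j := fun j => by
    rcases eq_or_ne j i with rfl | hj
    · simp
    · simpa [hj] using hg j hj
  calc d = 0 ↔ HasSum (update g i 0) 0 := ⟨fun hd => by simpa [hd] using hupd, fun h0 => by
        simpa using hupd.unique h0⟩
    _ ↔ ∀ j ≠ i, g j = 0 := by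
      rw [hasSum_zero_iff_of_nonneg hnonneg, funext_iff]
      refine forall_congr' fun j => ?_
      rcases eq_or_ne j i with rfl | hj <;> simp [*]

theorem memLp_two_restrict_Ioc {E : Type*} [NormedAddCommGroup E] {f : ℝ → E} (hf : Continuous f)
    (a b : ℝ) : MemLp f 2 (volume.restrict (Set.Ioc a b)) :=
  (MeasureTheory.memLp_two_iff_integrable_sq_norm hf.aestronglyMeasurable).2
    ((hf.norm.pow 2).integrableOn_Icc.mono_set Set.Ioc_subset_Icc_self)

theorem fourierCoeffOn_deriv {a b : ℝ} (hab : a < b) {f f' : ℝ → ℂ}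
    (hf : ∀ x, HasDerivAt f (f' x) x) (hf' : IntervalIntegrable f' volume a b) (hfab : f b = f a)
    (n : ℤ) :
    fourierCoeffOn hab f' n = 2 * π * Complex.I * n / (b - a) * fourierCoeffOn hab f n := by
  rcases eq_or_ne n 0 with rfl | hn
  · rw [fourierCoeffOn_eq_integral, neg_zero]
    simp only [fourier_zero, one_smul, integral_eq_sub_of_hasDerivAt (fun x _ => hf x) hf', hfab]
    simp
  · rw [fourierCoeffOn_of_hasDerivAt hab hn (fun x _ => hf x) hf', hfab, sub_self, mul_zero,
      zero_sub]
    have : (b : ℂ) - a ≠ 0 := by exact_mod_cast (sub_pos.2 hab).ne'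
    field_simp

theorem fourier_neg_coe_two_pi (n : ℤ) (x : ℝ) :
    fourier (T := 2 * π) (-n) (x : AddCircle (2 * π)) = cos (n * x) - sin (n * x) * Complex.I := by
  have : 2 * π * Complex.I * (-n : ℤ) * x / (2 * π : ℝ) = (-(n * x) : ℝ) * Complex.I := by
    push_cast
    field_simp
  rw [fourier_coe_apply, this, Complex.exp_mul_I, ← Complex.ofReal_cos, ← Complex.ofReal_sin,
    cos_neg, sin_neg]
  push_cast
  ring

section RealFourierCoeff

variable {p : ℝ → ℝ}

theorem fourierCoeffOn_ofReal (hp : Continuous p) (n : ℤ) :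
    fourierCoeffOn two_pi_pos (fun x => (p x : ℂ)) n =
      ((∫ x in 0..2 * π, p x * cos (n * x) : ℝ) -
        (∫ x in 0..2 * π, p x * sin (n * x) : ℝ) * Complex.I) / (2 * π) := by
  have hcos : IntervalIntegrable (fun x => ((p x * cos (n * x) : ℝ) : ℂ)) volume 0 (2 * π) := by
    apply Continuous.intervalIntegrable
    fun_prop
  have hsin : IntervalIntegrable (fun x => ((p x * sin (n * x) : ℝ) : ℂ) * Complex.I) volume 0
      (2 * π) := by
    apply Continuous.intervalIntegrable
    fun_prop
  have hintegrand (x : ℝ) : fourier (T := 2 * π) (-n) (x : AddCircle (2 * π)) • (p x : ℂ) =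
      ((p x * cos (n * x) : ℝ) : ℂ) - ((p x * sin (n * x) : ℝ) : ℂ) * Complex.I := by
    rw [fourier_neg_coe_two_pi, smul_eq_mul]
    push_cast
    ring
  rw [fourierCoeffOn_eq_integral, sub_zero, Complex.real_smul]
  simp only [hintegrand]
  rw [integral_sub hcos hsin, intervalIntegral.integral_mul_const, integral_ofReal, integral_ofReal]
  push_cast
  ring

theorem norm_sq_fourierCoeffOn_ofReal (hp : Continuous p) (n : ℤ) :
    ‖fourierCoeffOn two_pi_pos (fun x => (p x : ℂ)) n‖ ^ 2 =
      ((∫ x in 0..2 * π, p x * cos (n * x)) ^ 2 + (∫ x in 0..2 * π, p x * sin (n * x)) ^ 2) /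
        (2 * π) ^ 2 := by
  rw [fourierCoeffOn_ofReal hp, norm_div, div_pow, ← Complex.normSq_eq_norm_sq,
    Complex.normSq_apply]
  simp only [Complex.sub_re, Complex.sub_im, Complex.mul_re, Complex.mul_im, Complex.ofReal_re,
    Complex.ofReal_im, Complex.I_re, Complex.I_im]
  rw [← Complex.ofReal_ofNat, ← Complex.ofReal_mul, Complex.norm_real,
    Real.norm_of_nonneg two_pi_pos.le]
  ring

theorem norm_fourierCoeffOn_ofReal_neg (hp : Continuous p) (n : ℤ) :
    ‖fourierCoeffOn two_pi_pos (fun x => (p x : ℂ)) (-n)‖ =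
      ‖fourierCoeffOn two_pi_pos (fun x => (p x : ℂ)) n‖ := by
  rw [← sq_eq_sq₀ (norm_nonneg _) (norm_nonneg _), norm_sq_fourierCoeffOn_ofReal hp,
    norm_sq_fourierCoeffOn_ofReal hp]
  simp [integral_neg]

theorem norm_sq_fourierCoeffOn_ofReal_eq_natAbs (hp : Continuous p) (n : ℤ) :
    ‖fourierCoeffOn two_pi_pos (fun x => (p x : ℂ)) n‖ ^ 2 =
      ((π⁻¹ * ∫ x in 0..2 * π, p x * cos (n.natAbs * x)) ^ 2 +
        (π⁻¹ * ∫ x in 0..2 * π, p x * sin (n.natAbs * x)) ^ 2) / 4 := by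
  obtain ⟨m, rfl | rfl⟩ := Int.eq_nat_or_neg n <;>
    simp only [Int.natAbs_neg, Int.natAbs_natCast, norm_fourierCoeffOn_ofReal_neg hp] <;>
    rw [norm_sq_fourierCoeffOn_ofReal hp, Int.cast_natCast] <;>
    field_simp <;> ring

theorem hasSum_norm_sq_fourierCoeffOn_ofReal (hp : Continuous p) :
    HasSum (fun n => ‖fourierCoeffOn two_pi_pos (fun x => (p x : ℂ)) n‖ ^ 2)
      ((2 * π)⁻¹ * ∫ x in 0..2 * π, p x ^ 2) := by
  simpa using hasSum_sq_fourierCoeffOn two_pi_pos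
    (memLp_two_restrict_Ioc (f := fun x => (p x : ℂ)) (by fun_prop) 0 (2 * π))

theorem norm_sq_fourierCoeffOn_deriv {p' : ℝ → ℝ} (hp : ∀ x, HasDerivAt p (p' x) x)
    (hp' : Continuous p') (hper : Periodic p (2 * π)) (n : ℤ) :
    ‖fourierCoeffOn two_pi_pos (fun x => (p' x : ℂ)) n‖ ^ 2 =
      n ^ 2 * ‖fourierCoeffOn two_pi_pos (fun x => (p x : ℂ)) n‖ ^ 2 := by
  rw [fourierCoeffOn_deriv two_pi_pos (fun x => (hp x).ofReal_comp)
    ((Complex.continuous_ofReal.comp hp').intervalIntegrable _ _) (by simpa using hper 0)]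
  have hfactor : 2 * π * Complex.I * n / ((2 * π : ℝ) - (0 : ℝ) : ℂ) = Complex.I * n := by
    push_cast
    field_simp
    ring
  rw [hfactor, norm_mul, mul_pow, norm_mul, Complex.norm_I, one_mul, Complex.norm_intCast, sq_abs]

theorem integral_mul_eq_zero_of_add_pi_eq {t : ℝ → ℝ} {C : ℝ} (hp : Continuous p)
    (hper : Periodic p (2 * π)) (hw : ∀ x, p x + p (x + π) = C) (ht : Continuous t)
    (htper : Periodic t π) (ht0 : ∫ x in 0..2 * π, t x = 0) :
    ∫ x in 0..2 * π, p x * t x = 0 := by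
  have hshift : ∫ x in 0..2 * π, p (x + π) * t x = ∫ x in 0..2 * π, p x * t x := by
    have hpt : Periodic (fun x => p x * t x) (2 * π) :=
      hper.mul (by simpa [two_mul] using htper.nsmul 2)
    simp only [fun x => congrArg (p (x + π) * ·) (htper x).symm]
    rw [integral_comp_add_right (fun x => p x * t x), zero_add, add_comm,
      hpt.intervalIntegral_add_eq π 0, zero_add]
  have hsum : ∫ x in 0..2 * π, (p x * t x + p (x + π) * t x) = 0 := by
    simp_rw [← add_mul, hw, integral_const_mul, ht0, mul_zero]
  rwa [integral_add (f := fun x => p x * t x) (g := fun x => p (x + π) * t x)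
    ((hp.mul ht).intervalIntegrable _ _)
    (((hp.comp (continuous_add_const π)).mul ht).intervalIntegrable _ _), hshift, ← two_mul,
    mul_eq_zero, or_iff_right two_ne_zero] at hsum

theorem integral_cos_int_mul {n : ℤ} (hn : n ≠ 0) : ∫ x in 0..2 * π, cos (n * x) = 0 := by
  rw [integral_comp_mul_left cos (Int.cast_ne_zero.2 hn), integral_cos]
  simpa [hn, mul_assoc] using sin_int_mul_pi (n * 2)

theorem integral_sin_int_mul (n : ℤ) : ∫ x in 0..2 * π, sin (n * x) = 0 := by
  rcases eq_or_ne n 0 with rfl | hn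
  · simp
  · rw [integral_comp_mul_left sin (Int.cast_ne_zero.2 hn), integral_sin]
    simp

theorem fourierCoeffOn_eq_zero_of_even {C : ℝ} (hp : Continuous p) (hper : Periodic p (2 * π))
    (hw : ∀ x, p x + p (x + π) = C) {n : ℤ} (hn : Even n) (hn0 : n ≠ 0) :
    fourierCoeffOn two_pi_pos (fun x => (p x : ℂ)) n = 0 := by
  obtain ⟨k, rfl⟩ := hn
  have hpi {f : ℝ → ℝ} (hf : Periodic f (2 * π)) : Periodic (fun x => f (↑(k + k) * x)) π :=
    fun x => by
      dsimp only
      rw [show (↑(k + k) : ℝ) * (x + π) = ↑(k + k) * x + k * (2 * π) by push_cast; ring]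
      exact hf.int_mul k _
  rw [fourierCoeffOn_ofReal hp,
    integral_mul_eq_zero_of_add_pi_eq hp hper hw (by fun_prop) (hpi cos_periodic)
      (integral_cos_int_mul hn0),
    integral_mul_eq_zero_of_add_pi_eq hp hper hw (by fun_prop) (hpi sin_periodic)
      (integral_sin_int_mul _)]
  simp

end RealFourierCoeff

def deficitWeight (n : ℤ) : ℤ := (n ^ 2 - 1) * (n ^ 2 - 9)

theorem deficitWeight_nonneg {n : ℤ} (h : n ^ 2 ≠ 4) : 0 ≤ deficitWeight n := by
  by_contra! hneg
  rw [deficitWeight] at hneg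
  have h9 : n ^ 2 < 9 := by nlinarith
  have h1 : 1 < n ^ 2 := by nlinarith
  have h3 : |n| < 3 := by nlinarith [sq_abs n, abs_nonneg n]
  rcases abs_lt.1 h3 with ⟨h3, h3'⟩
  interval_cases n <;> simp_all

theorem deficitWeight_eq_zero_iff {n : ℤ} (h0 : n ≠ 0) (h2 : n ^ 2 ≠ 4) :
    deficitWeight n = 0 ↔ |n| < 4 := by
  rw [deficitWeight]
  constructor
  · intro h
    by_contra! h4
    have : 16 ≤ n ^ 2 := by nlinarith [sq_abs n]
    nlinarith
  · intro h4
    have : n ^ 2 = 1 ∨ n ^ 2 = 9 := by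
      rcases abs_lt.1 h4 with ⟨h4, h4'⟩
      interval_cases n <;> simp_all
    rcases this with h | h <;> simp [h]

theorem deficitWeight_mul_nonneg {r : ℤ → ℝ} (hr : ∀ n, 0 ≤ r n)
    (hr2 : ∀ n : ℤ, n ^ 2 = 4 → r n = 0) (n : ℤ) : 0 ≤ (deficitWeight n : ℝ) * r n := by
  by_cases hn : n ^ 2 = 4
  · simp [hr2 n hn]
  · exact mul_nonneg (by exact_mod_cast deficitWeight_nonneg hn) (hr n)

theorem forall_deficitWeight_mul_eq_zero_iff {r : ℤ → ℝ} (hr2 : ∀ n : ℤ, n ^ 2 = 4 → r n = 0) :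
    (∀ n : ℤ, n ≠ 0 → (deficitWeight n : ℝ) * r n = 0) ↔ ∀ n : ℤ, 4 ≤ |n| → r n = 0 := by
  simp only [mul_eq_zero, Int.cast_eq_zero]
  constructor
  · intro h n hn
    have hn0 : n ≠ 0 := by
      rintro rfl
      norm_num at hn
    have hn2 : n ^ 2 ≠ 4 := by nlinarith [sq_abs n]
    exact (h n hn0).resolve_left ((deficitWeight_eq_zero_iff hn0 hn2).not.2 (not_lt.2 hn))
  · intro h n hn0
    by_cases hn2 : n ^ 2 = 4
    · exact Or.inr (hr2 n hn2)
    by_cases hn : 4 ≤ |n|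
    · exact Or.inr (h n hn)
    · exact Or.inl ((deficitWeight_eq_zero_iff hn0 hn2).2 (not_le.1 hn))

theorem hasSum_deficitWeight_mul_norm_sq_fourierCoeffOn {p : ℝ → ℝ} (hp : ContDiff ℝ 2 p)
    (hper : Periodic p (2 * π)) :
    HasSum
      (fun n : ℤ => (deficitWeight n : ℝ) * ‖fourierCoeffOn two_pi_pos (fun x => (p x : ℂ)) n‖ ^ 2)
      (deficitWeight 0 * ‖fourierCoeffOn two_pi_pos (fun x => (p x : ℂ)) 0‖ ^ 2 - 9 / (4 * π ^ 2) *
        ((∫ x in 0..2 * π, p x) ^ 2 - 4 * π * ((1 / 2) * ∫ x in 0..2 * π, p x ^ 2 - deriv p x ^ 2)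
          - 4 / 9 * π * ((1 / 2) * ∫ x in 0..2 * π, deriv (deriv p) x ^ 2 - deriv p x ^ 2))) := by
  obtain ⟨hd1, -, hp'⟩ := (contDiff_succ_iff_deriv (n := 1)).1 hp
  obtain ⟨hd2, -, hp''⟩ := (contDiff_succ_iff_deriv (n := 0)).1 hp'
  have S0 := hasSum_norm_sq_fourierCoeffOn_ofReal hp.continuous
  have S1 := hasSum_norm_sq_fourierCoeffOn_ofReal hd2.continuous
  have S2 := hasSum_norm_sq_fourierCoeffOn_ofReal hp''.continuous
  simp only [norm_sq_fourierCoeffOn_deriv (fun x => (hd1 x).hasDerivAt) hd2.continuous hper,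
    norm_sq_fourierCoeffOn_deriv (fun x => (hd2 x).hasDerivAt) hp''.continuous hper.deriv] at S1 S2
  convert (S2.sub (S1.mul_left 10)).add (S0.mul_left 9) using 1
  · rfl
  · ext n
    push_cast [deficitWeight]
    ring
  · have hsq {f : ℝ → ℝ} (hf : Continuous f) :
        IntervalIntegrable (fun x => f x ^ 2) volume 0 (2 * π) :=
      (hf.pow 2).intervalIntegrable _ _
    rw [integral_sub (hsq hp.continuous) (hsq hd2.continuous),
      integral_sub (hsq hp''.continuous) (hsq hd2.continuous),
      norm_sq_fourierCoeffOn_ofReal hp.continuous]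
    simp only [deficitWeight, Int.cast_zero, zero_mul, cos_zero, sin_zero, mul_one, mul_zero,
      integral_zero]
    field_simp
    ring

theorem stmt_10_general (p : ℝ → ℝ) (hp : ContDiff ℝ 2 p)
    (hper : ∀ x, p (x + 2 * π) = p x)
    (hwidth : ∀ x y, p x + p (x + π) = p y + p (y + π))
    (a b : ℕ → ℝ)
    (ha : ∀ n, a n = (1 / π) * ∫ x in (0:ℝ)..(2 * π), p x * Real.cos (n * x))
    (hb : ∀ n, b n = (1 / π) * ∫ x in (0:ℝ)..(2 * π), p x * Real.sin (n * x))
    (L F Fe : ℝ)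
    (hL : L = ∫ x in (0:ℝ)..(2 * π), p x)
    (hF : F = (1 / 2) * ∫ x in (0:ℝ)..(2 * π), (p x) ^ 2 - (deriv p x) ^ 2)
    (hFe : Fe = (1 / 2) * ∫ x in (0:ℝ)..(2 * π),
      (deriv (deriv p) x) ^ 2 - (deriv p x) ^ 2) :
    L ^ 2 - 4 * π * F = (4 / 9) * π * Fe ↔ ∀ n, 4 ≤ n → a n = 0 ∧ b n = 0 := by
  subst hL hF hFe
  have hr2 (n : ℤ) (hn : n ^ 2 = 4) :
      ‖fourierCoeffOn two_pi_pos (fun x => (p x : ℂ)) n‖ ^ 2 = 0 := by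
    have hn0 : n ≠ 0 := by
      rintro rfl
      norm_num at hn
    rw [fourierCoeffOn_eq_zero_of_even hp.continuous hper (hwidth · 0)
      ((Int.even_pow' two_ne_zero).1 (hn ▸ by decide)) hn0, norm_zero, sq, zero_mul]
  rw [← sub_eq_zero, ← mul_eq_zero_iff_left (by positivity : 9 / (4 * π ^ 2) ≠ 0),
    eq_zero_iff_of_hasSum_apply_sub (hasSum_deficitWeight_mul_norm_sq_fourierCoeffOn hp hper)
      fun n _ => deficitWeight_mul_nonneg (fun n => by positivity) hr2 n,
    forall_deficitWeight_mul_eq_zero_iff hr2]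
  simp only [one_div] at ha hb
  simp only [norm_sq_fourierCoeffOn_ofReal_eq_natAbs hp.continuous, ← ha, ← hb, sq,
    div_eq_zero_iff, four_ne_zero, or_false, mul_self_add_mul_self_eq_zero]
  constructor
  · intro h m hm
    simpa using h m (by simpa using hm)
  · intro h n hn
    exact h n.natAbs (by rw [← Int.natCast_natAbs] at hn; omega)

theorem stmt_10 (p : ℝ → ℝ) (hp : ContDiff ℝ 2 p)
    (hper : ∀ x, p (x + 2 * π) = p x)
    (hconv : ∀ x, 0 < p x + deriv (deriv p) x)
    (hwidth : ∀ x y, p x + p (x + π) = p y + p (y + π))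
    (a b : ℕ → ℝ)
    (ha : ∀ n, a n = (1 / π) * ∫ x in (0:ℝ)..(2 * π), p x * Real.cos (n * x))
    (hb : ∀ n, b n = (1 / π) * ∫ x in (0:ℝ)..(2 * π), p x * Real.sin (n * x))
    (L F Fe : ℝ)
    (hL : L = ∫ x in (0:ℝ)..(2 * π), p x)
    (hF : F = (1 / 2) * ∫ x in (0:ℝ)..(2 * π), (p x) ^ 2 - (deriv p x) ^ 2)
    (hFe : Fe = (1 / 2) * ∫ x in (0:ℝ)..(2 * π),
      (deriv (deriv p) x) ^ 2 - (deriv p x) ^ 2) :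
    L ^ 2 - 4 * π * F = (4 / 9) * π * Fe ↔ ∀ n, 4 ≤ n → a n = 0 ∧ b n = 0 :=
  stmt_10_general p hp hper hwidth a b ha hb L F Fe hL hF hFe
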